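/- arXiv:1712.07733 — 2 statements merged into one kernel-verified Lean document; each statement's English description precedes it below -/
import Mathlib

section
/- Let r₀ ≥ 0, ζ > 0, and let L be a function which is positive, differentiable and nonincreasing on [r₀, ∞), satisfies L(x) → 0 as x → ∞, and satisfies x·L(x) ≥ ζ·(−L′(x)) for all x ≥ r₀. Then for every t > 0, ∫_{r₀}^∞ t·x·L(x)/(1 + t·L(x)) dx ≥ ζ·ln(1 + t·L(r₀)). -/
/-!
Put `G(x) = -ζ log (1 + t L(x))`, so that `G' = t ζ (-L') / (1 + t L)`. Monotonicity of `L` gives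
`G' ≥ 0` and the regularity condition gives `G' ≤ t x L / (1 + t L)`, the integrand. Since `G → 0`
at infinity, the integral of `G'` over `(r₀, ∞)` is `-G(r₀) = ζ log (1 + t L(r₀))`.
-/

open MeasureTheory Filter Set Topology

lemma HasDerivAt.nonpos_of_antitoneOn_Ici {f : ℝ → ℝ} {f' x : ℝ} (hf : HasDerivAt f f' x)
    (hmono : AntitoneOn f (Ici x)) : f' ≤ 0 :=
  hf.hasDerivWithinAt.nonpos_of_antitoneOn
    (by rw [accPt_principal_iff_nhdsWithin, Ici_sdiff_left]; infer_instance) hmono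

theorem ofReal_sub_le_lintegral_Ioi_of_hasDerivAt_le {g g' f : ℝ → ℝ} {a l : ℝ}
    (hderiv : ∀ x ∈ Ici a, HasDerivAt g (g' x) x) (hg'_nonneg : ∀ x ∈ Ioi a, 0 ≤ g' x)
    (hg : Tendsto g atTop (𝓝 l)) (hle : ∀ x ∈ Ioi a, g' x ≤ f x) :
    ENNReal.ofReal (l - g a) ≤ ∫⁻ x in Ioi a, ENNReal.ofReal (f x) := by
  rw [← integral_Ioi_of_hasDerivAt_of_nonneg' hderiv hg'_nonneg hg,
    ofReal_integral_eq_lintegral_ofReal (integrableOn_Ioi_deriv_of_nonneg' hderiv hg'_nonneg hg)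
      ((ae_restrict_iff' measurableSet_Ioi).2 (ae_of_all _ hg'_nonneg))]
  exact setLIntegral_mono' measurableSet_Ioi fun x hx => ENNReal.ofReal_le_ofReal (hle x hx)

lemma HasDerivAt.neg_const_mul_log_one_add_const_mul {L : ℝ → ℝ} {L' x : ℝ} (ζ t : ℝ)
    (hL : HasDerivAt L L' x) (hpos : 0 < 1 + t * L x) :
    HasDerivAt (fun y => -ζ * Real.log (1 + t * L y)) (t * (ζ * -L') / (1 + t * L x)) x :=
  (((hL.const_mul t).const_add 1).log hpos.ne' |>.const_mul (-ζ)).congr_deriv (by ring)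

lemma tendsto_neg_const_mul_log_one_add_const_mul {L : ℝ → ℝ} (ζ t : ℝ)
    (hL : Tendsto L atTop (𝓝 0)) :
    Tendsto (fun y => -ζ * Real.log (1 + t * L y)) atTop (𝓝 0) := by
  have hlog : Tendsto (fun y => Real.log (1 + t * L y)) atTop (𝓝 (Real.log (1 + t * 0))) :=
    (Real.continuousAt_log (by norm_num)).tendsto.comp ((hL.const_mul t).const_add 1)
  simpa using hlog.const_mul (-ζ)

theorem integral_lower_bound_log_general
    (r₀ ζ : ℝ) (hζ : 0 < ζ) (L L' : ℝ → ℝ)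
    (hLpos : ∀ x, r₀ ≤ x → 0 < L x)
    (hLderiv : ∀ x, r₀ ≤ x → HasDerivAt L (L' x) x)
    (hLmono : ∀ x y, r₀ ≤ x → x ≤ y → L y ≤ L x)
    (hLlim : Filter.Tendsto L Filter.atTop (nhds 0))
    (hreg : ∀ x, r₀ ≤ x → ζ * (-(L' x)) ≤ x * L x) :
    ∀ t : ℝ, 0 < t →
      ENNReal.ofReal (ζ * Real.log (1 + t * L r₀)) ≤
        ∫⁻ x in Set.Ioi r₀, ENNReal.ofReal (t * x * L x / (1 + t * L x)) := by
  intro t ht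
  have hden : ∀ x, r₀ ≤ x → 0 < 1 + t * L x := fun x hx => by
    have := hLpos x hx
    positivity
  have hL'_nonpos : ∀ x, r₀ ≤ x → L' x ≤ 0 := fun x hx =>
    (hLderiv x hx).nonpos_of_antitoneOn_Ici fun y hy _ _ hyz => hLmono y _ (hx.trans hy) hyz
  have hG'_nonneg : ∀ x ∈ Ioi r₀, 0 ≤ t * (ζ * -L' x) / (1 + t * L x) := fun x hx =>
    div_nonneg (mul_nonneg ht.le (mul_nonneg hζ.le (neg_nonneg.2 (hL'_nonpos x hx.out.le))))
      (hden x hx.out.le).le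
  have hG'_le : ∀ x ∈ Ioi r₀,
      t * (ζ * -L' x) / (1 + t * L x) ≤ t * x * L x / (1 + t * L x) := fun x hx =>
    div_le_div_of_nonneg_right
      (by rw [mul_assoc]; exact mul_le_mul_of_nonneg_left (hreg x hx.out.le) ht.le)
      (hden x hx.out.le).le
  simpa using ofReal_sub_le_lintegral_Ioi_of_hasDerivAt_le
    (fun x hx => (hLderiv x hx).neg_const_mul_log_one_add_const_mul ζ t (hden x hx))
    hG'_nonneg (tendsto_neg_const_mul_log_one_add_const_mul ζ t hLlim) hG'_le

/-- Let `r₀ ≥ 0`, `ζ > 0`, and let `L` be positive, differentiable and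
nonincreasing on `[r₀, ∞)`, with `L(x) → 0` as `x → ∞` and `x·L(x) ≥ ζ·(−L′(x))` for all
`x ≥ r₀`. Then for every `t > 0`,
`∫_{r₀}^∞ t·x·L(x)/(1 + t·L(x)) dx ≥ ζ·ln(1 + t·L(r₀))`
(the integral being a Lebesgue lower integral, possibly infinite). -/
theorem integral_lower_bound_log
    (r₀ ζ : ℝ) (hr₀ : 0 ≤ r₀) (hζ : 0 < ζ) (L L' : ℝ → ℝ)
    (hLpos : ∀ x, r₀ ≤ x → 0 < L x)
    (hLderiv : ∀ x, r₀ ≤ x → HasDerivAt L (L' x) x)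
    (hLmono : ∀ x y, r₀ ≤ x → x ≤ y → L y ≤ L x)
    (hLlim : Filter.Tendsto L Filter.atTop (nhds 0))
    (hreg : ∀ x, r₀ ≤ x → ζ * (-(L' x)) ≤ x * L x) :
    ∀ t : ℝ, 0 < t →
      ENNReal.ofReal (ζ * Real.log (1 + t * L r₀)) ≤
        ∫⁻ x in Set.Ioi r₀, ENNReal.ofReal (t * x * L x / (1 + t * L x)) :=
  integral_lower_bound_log_general r₀ ζ hζ L L' hLpos hLderiv hLmono hLlim hreg
end

section
/- Let r₀ ≥ 0, ζ > 0, and let L : [0,∞) → (0,∞) be measurable, differentiable and nonincreasing on [r₀, ∞), with L(x) → 0 as x → ∞ and x·L(x) ≥ ζ·(−L′(x)) for all x ≥ r₀. Then for every λ > 1/(πζ), the double integral T₂ = ∫_0^∞ ∫_{r₀}^∞ 2πλ·r·t·exp( −πλr² − 2πλ·t·∫_{r}^∞ x·L(x)/(1+t·L(x)) dx ) dr dt satisfies T₂ ≤ (2πλ/((2πλζ−1)(2πλζ−2))) · ∫_{r₀}^∞ (r / L(r)²)·e^{−πλ r²} dr. -/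
/-!
By `ζ (-L') ≤ x L`, the integrand `x L / (1 + t L)` dominates the derivative of
`-(ζ/t) log (1 + t L)`, which vanishes at infinity; hence
`∫_r^∞ x L / (1 + t L) dx ≥ (ζ/t) log (1 + t L(r))`, and with `β = 2πλζ` the integrand of `T₂` is
at most `2πλ r e^{-πλr²} · t (1 + t L(r))^{-β}`. After exchanging the integrals (Tonelli), the
`t`-integral is `∫_0^∞ t (1 + c t)^{-β} dt = 1 / (c² (β-1) (β-2))`, finite because `β > 2`.
-/

open MeasureTheory

/-- The exponential `x ↦ e^{-x}` extended to `[0,∞]`, with `e^{-∞} = 0`. -/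
noncomputable def expNeg (x : ENNReal) : ENNReal :=
  if x = ⊤ then 0 else ENNReal.ofReal (Real.exp (-x.toReal))

open Set Filter Topology Real

theorem expNeg_ofReal {a : ℝ} (ha : 0 ≤ a) :
    expNeg (ENNReal.ofReal a) = ENNReal.ofReal (exp (-a)) := by
  rw [expNeg, if_neg ENNReal.ofReal_ne_top, ENNReal.toReal_ofReal ha]

theorem expNeg_antitone : Antitone expNeg := by
  intro a b hab
  rcases eq_or_ne b ⊤ with rfl | hb
  · simp [expNeg]
  · have ha : a ≠ ⊤ := ne_top_of_le_ne_top hb hab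
    rw [expNeg, expNeg, if_neg hb, if_neg ha]
    gcongr

theorem ofReal_sub_le_setLIntegral_Ioi {H H' φ : ℝ → ℝ} {a l : ℝ}
    (hH : ∀ x ∈ Ici a, HasDerivAt H (H' x) x) (hφ : ContinuousOn φ (Ici a))
    (hφ0 : ∀ x ∈ Ioi a, 0 ≤ φ x) (hle : ∀ x ∈ Ioi a, H' x ≤ φ x)
    (hlim : Tendsto H atTop (𝓝 l)) :
    ENNReal.ofReal (l - H a) ≤ ∫⁻ x in Ioi a, ENNReal.ofReal (φ x) := by
  have hbound : ∀ b, a ≤ b →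
      ENNReal.ofReal (H b - H a) ≤ ∫⁻ x in Ioi a, ENNReal.ofReal (φ x) := by
    intro b hab
    have hint : IntegrableOn φ (Icc a b) := (hφ.mono Icc_subset_Ici_self).integrableOn_Icc
    have hsub : H b - H a ≤ ∫ x in Ioc a b, φ x := by
      rw [← intervalIntegral.integral_of_le hab]
      exact intervalIntegral.sub_le_integral_of_hasDeriv_right_of_le hab
        (fun x hx => (hH x hx.1).continuousAt.continuousWithinAt)
        (fun x hx => (hH x hx.1.le).hasDerivWithinAt) hint (fun x hx => hle x hx.1)
    calc ENNReal.ofReal (H b - H a) ≤ ENNReal.ofReal (∫ x in Ioc a b, φ x) :=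
          ENNReal.ofReal_le_ofReal hsub
      _ = ∫⁻ x in Ioc a b, ENNReal.ofReal (φ x) :=
          ofReal_integral_eq_lintegral_ofReal (hint.mono_set Ioc_subset_Icc_self)
            ((ae_restrict_iff' measurableSet_Ioc).mpr (.of_forall fun x hx => hφ0 x hx.1))
      _ ≤ _ := lintegral_mono_set Ioc_subset_Ioi_self
  exact le_of_tendsto ((ENNReal.continuous_ofReal.tendsto _).comp (hlim.sub_const _))
    (eventually_atTop.mpr ⟨a, hbound⟩)

theorem ofReal_div_mul_log_le_setLIntegral_Ioi {L L' : ℝ → ℝ} {ζ t r : ℝ} (ht : 0 < t)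
    (hr : 0 ≤ r) (hL : ∀ x ∈ Ici r, HasDerivAt L (L' x) x) (hL0 : ∀ x ∈ Ici r, 0 ≤ L x)
    (hlim : Tendsto L atTop (𝓝 0)) (hreg : ∀ x ∈ Ici r, ζ * -L' x ≤ x * L x) :
    ENNReal.ofReal (ζ / t * log (1 + t * L r)) ≤
      ∫⁻ x in Ioi r, ENNReal.ofReal (x * L x / (1 + t * L x)) := by
  have hden : ∀ x ∈ Ici r, 0 < 1 + t * L x := fun x hx => by
    have := hL0 x hx; positivity
  have hH : ∀ x ∈ Ici r, HasDerivAt (fun x => -(ζ / t) * log (1 + t * L x))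
      (ζ * -L' x / (1 + t * L x)) x := by
    intro x hx
    have h := (((hL x hx).const_mul t).const_add 1).log (hden x hx).ne'
    refine (h.const_mul (-(ζ / t))).congr_deriv ?_
    field_simp
  have hlimH : Tendsto (fun x => -(ζ / t) * log (1 + t * L x)) atTop (𝓝 0) := by
    have h := ((continuousAt_log one_ne_zero).tendsto.comp
      (by simpa using (hlim.const_mul t).const_add 1)).const_mul (-(ζ / t))
    simpa [Function.comp_def] using h
  have hφ : ContinuousOn (fun x => x * L x / (1 + t * L x)) (Ici r) := by
    have hLc : ContinuousOn L (Ici r) := fun x hx => (hL x hx).continuousAt.continuousWithinAt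
    exact (continuousOn_id.mul hLc).div (continuousOn_const.add (continuousOn_const.mul hLc))
      fun x hx => (hden x hx).ne'
  have hφ0 : ∀ x ∈ Ioi r, 0 ≤ x * L x / (1 + t * L x) := fun x (hx : r < x) =>
    div_nonneg (mul_nonneg (hr.trans hx.le) (hL0 x hx.le)) (hden x hx.le).le
  have key := ofReal_sub_le_setLIntegral_Ioi hH hφ hφ0
    (fun x (hx : r < x) => div_le_div_of_nonneg_right (hreg x hx.le) (hden x hx.le).le) hlimH
  simpa using key

theorem expNeg_add_mul_le_exp_mul_rpow {a c ζ t ℓ : ℝ} {J : ENNReal} (ha : 0 ≤ a) (hc : 0 ≤ c)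
    (hζ : 0 ≤ ζ) (ht : 0 < t) (hℓ : 0 ≤ ℓ)
    (hJ : ENNReal.ofReal (ζ / t * log (1 + t * ℓ)) ≤ J) :
    expNeg (ENNReal.ofReal a + ENNReal.ofReal (c * t) * J) ≤
      ENNReal.ofReal (exp (-a) * (1 + t * ℓ) ^ (-(c * ζ))) := by
  have hpos : 0 < 1 + t * ℓ := by positivity
  have hlog : 0 ≤ log (1 + t * ℓ) := log_nonneg (by nlinarith)
  have hexp : ENNReal.ofReal (a + c * ζ * log (1 + t * ℓ)) ≤
      ENNReal.ofReal a + ENNReal.ofReal (c * t) * J := by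
    have hsplit : c * ζ * log (1 + t * ℓ) = c * t * (ζ / t * log (1 + t * ℓ)) := by
      field_simp
    rw [ENNReal.ofReal_add ha (by positivity), hsplit, ENNReal.ofReal_mul (by positivity)]
    gcongr
  calc _ ≤ expNeg (ENNReal.ofReal (a + c * ζ * log (1 + t * ℓ))) := expNeg_antitone hexp
    _ = _ := by
      rw [expNeg_ofReal (by positivity), rpow_def_of_pos hpos, ← exp_add]
      congr 2
      ring

theorem lintegral_Ioi_mul_one_add_mul_rpow_neg {c β : ℝ} (hc : 0 < c) (hβ : 2 < β) :
    ∫⁻ t in Ioi 0, ENNReal.ofReal (t * (1 + t * c) ^ (-β)) =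
      ENNReal.ofReal (1 / (c ^ 2 * (β - 1) * (β - 2))) := by
  have hbase : ∀ t ∈ Ici (0 : ℝ), 0 < 1 + t * c := fun t (ht : 0 ≤ t) => by positivity
  set F : ℝ → ℝ := fun t =>
    ((1 + t * c) ^ (2 - β) / (2 - β) - (1 + t * c) ^ (1 - β) / (1 - β)) / c ^ 2
  have hF : ∀ t ∈ Ici (0 : ℝ), HasDerivAt F (t * (1 + t * c) ^ (-β)) t := by
    intro t ht
    have hlin : HasDerivAt (fun t => 1 + t * c) c t := by
      simpa using ((hasDerivAt_id t).mul_const c).const_add 1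
    have h2 := hlin.rpow_const (p := 2 - β) (.inl (hbase t ht).ne')
    have h1 := hlin.rpow_const (p := 1 - β) (.inl (hbase t ht).ne')
    refine (((h2.div_const (2 - β)).sub (h1.div_const (1 - β))).div_const (c ^ 2)).congr_deriv ?_
    rw [show 2 - β - 1 = 1 + -β by ring, show 1 - β - 1 = -β by ring,
      rpow_add (hbase t ht), rpow_one]
    have : 2 - β ≠ 0 := by linarith
    have : 1 - β ≠ 0 := by linarith
    field_simp
    ring
  have hlin : Tendsto (fun t => 1 + t * c) atTop atTop :=
    tendsto_atTop_add_const_left _ 1 (tendsto_id.atTop_mul_const hc)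
  have hF0 : Tendsto F atTop (𝓝 0) := by
    have h2 := (tendsto_rpow_neg_atTop (y := β - 2) (by linarith)).comp hlin
    have h1 := (tendsto_rpow_neg_atTop (y := β - 1) (by linarith)).comp hlin
    have := ((h2.div_const (2 - β)).sub (h1.div_const (1 - β))).div_const (c ^ 2)
    simpa [Function.comp_def, neg_sub] using this
  have hnn : ∀ t ∈ Ioi (0 : ℝ), 0 ≤ t * (1 + t * c) ^ (-β) := fun t (ht : 0 < t) => by
    positivity
  rw [← ofReal_integral_eq_lintegral_ofReal (integrableOn_Ioi_deriv_of_nonneg' hF hnn hF0)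
      ((ae_restrict_iff' measurableSet_Ioi).mpr (.of_forall hnn)),
    integral_Ioi_of_hasDerivAt_of_nonneg' hF hnn hF0]
  congr 1
  have : 2 - β ≠ 0 := by linarith
  have : 1 - β ≠ 0 := by linarith
  have : β - 1 ≠ 0 := by linarith
  have : β - 2 ≠ 0 := by linarith
  simp only [F, zero_mul, add_zero, one_rpow]
  field_simp
  ring

theorem ofReal_mul_expNeg_le_mul_rpow {L L' : ℝ → ℝ} {ζ lam t r : ℝ} (hζ : 0 ≤ ζ)
    (hlam : 0 ≤ lam) (ht : 0 < t) (hr : 0 ≤ r) (hL : ∀ x ∈ Ici r, HasDerivAt L (L' x) x)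
    (hL0 : ∀ x ∈ Ici r, 0 ≤ L x) (hlim : Tendsto L atTop (𝓝 0))
    (hreg : ∀ x ∈ Ici r, ζ * -L' x ≤ x * L x) :
    ENNReal.ofReal (2 * π * lam * r * t) *
        expNeg (ENNReal.ofReal (π * lam * r ^ 2) + ENNReal.ofReal (2 * π * lam * t) *
          ∫⁻ x in Ioi r, ENNReal.ofReal (x * L x / (1 + t * L x))) ≤
      ENNReal.ofReal (2 * π * lam * r * exp (-(π * lam * r ^ 2))) *
        ENNReal.ofReal (t * (1 + t * L r) ^ (-(2 * π * lam * ζ))) := by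
  have hLr := hL0 r self_mem_Ici
  calc _ ≤ ENNReal.ofReal (2 * π * lam * r * t) *
        ENNReal.ofReal (exp (-(π * lam * r ^ 2)) * (1 + t * L r) ^ (-(2 * π * lam * ζ))) := by
        gcongr
        exact expNeg_add_mul_le_exp_mul_rpow (by positivity) (by positivity) hζ ht hLr
          (ofReal_div_mul_log_le_setLIntegral_Ioi ht hr hL hL0 hlim hreg)
    _ = _ := by
        rw [← ENNReal.ofReal_mul (by positivity), ← ENNReal.ofReal_mul (by positivity)]
        congr 1
        ring

theorem second_negative_moment_T2_bound_general
    (r₀ ζ lam : ℝ) (hr₀ : 0 ≤ r₀) (hζ : 0 < ζ) (L L' : ℝ → ℝ)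
    (hLmeas : Measurable L)
    (hLpos : ∀ x, 0 ≤ x → 0 < L x)
    (hLderiv : ∀ x, r₀ ≤ x → HasDerivAt L (L' x) x)
    (hLlim : Filter.Tendsto L Filter.atTop (nhds 0))
    (hreg : ∀ x, r₀ ≤ x → ζ * (-(L' x)) ≤ x * L x)
    (hlam : 1 / (Real.pi * ζ) < lam) :
    (∫⁻ t in Set.Ioi (0 : ℝ), ∫⁻ r in Set.Ioi r₀,
        ENNReal.ofReal (2 * Real.pi * lam * r * t) *
          expNeg (ENNReal.ofReal (Real.pi * lam * r ^ 2) +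
            ENNReal.ofReal (2 * Real.pi * lam * t) *
              ∫⁻ x in Set.Ioi r, ENNReal.ofReal (x * L x / (1 + t * L x)))) ≤
      ENNReal.ofReal (2 * Real.pi * lam /
          ((2 * Real.pi * lam * ζ - 1) * (2 * Real.pi * lam * ζ - 2))) *
        ∫⁻ r in Set.Ioi r₀,
          ENNReal.ofReal (r / L r ^ 2 * Real.exp (-(Real.pi * lam * r ^ 2))) := by
  have hlam0 : 0 < lam := lt_trans (by positivity) hlam
  set β := 2 * π * lam * ζ
  have hβ : 2 < β := by
    have := (div_lt_iff₀ (by positivity)).mp hlam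
    nlinarith
  have hβ1 : 0 < β - 1 := by linarith
  have hβ2 : 0 < β - 2 := by linarith
  set G : ℝ → ℝ → ENNReal := fun t r =>
    ENNReal.ofReal (2 * π * lam * r * exp (-(π * lam * r ^ 2))) *
      ENNReal.ofReal (t * (1 + t * L r) ^ (-β))
  calc _ ≤ ∫⁻ t in Ioi 0, ∫⁻ r in Ioi r₀, G t r :=
        setLIntegral_mono' measurableSet_Ioi fun t (ht : 0 < t) =>
          setLIntegral_mono' measurableSet_Ioi fun r (hr : r₀ < r) =>
            ofReal_mul_expNeg_le_mul_rpow hζ.le hlam0.le ht (hr₀.trans hr.le)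
              (fun x hx => hLderiv x (hr.le.trans hx))
              (fun x hx => (hLpos x (hr₀.trans (hr.le.trans hx))).le) hLlim
              (fun x hx => hreg x (hr.le.trans hx))
    _ = ∫⁻ r in Ioi r₀, ∫⁻ t in Ioi 0, G t r :=
        lintegral_lintegral_swap (Measurable.aemeasurable (by fun_prop))
    _ = ∫⁻ r in Ioi r₀, ENNReal.ofReal (2 * π * lam / ((β - 1) * (β - 2))) *
          ENNReal.ofReal (r / L r ^ 2 * exp (-(π * lam * r ^ 2))) := by
        refine setLIntegral_congr_fun measurableSet_Ioi fun r (hr : r₀ < r) => ?_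
        have h0r : 0 ≤ r := hr₀.trans hr.le
        have hLr := hLpos r h0r
        rw [lintegral_const_mul' _ _ ENNReal.ofReal_ne_top,
          lintegral_Ioi_mul_one_add_mul_rpow_neg hLr hβ, ← ENNReal.ofReal_mul (by positivity),
          ← ENNReal.ofReal_mul (div_nonneg (by positivity) (mul_pos hβ1 hβ2).le)]
        congr 1
        field_simp
    _ = _ := lintegral_const_mul' _ _ ENNReal.ofReal_ne_top

/-- Let `r₀ ≥ 0`, `ζ > 0`, and `L : [0,∞) → (0,∞)` measurable, differentiable
and nonincreasing on `[r₀,∞)`, with `L(x) → 0` as `x → ∞` and `x·L(x) ≥ ζ·(−L′(x))` for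
`x ≥ r₀`. Then for every `λ > 1/(πζ)`, the double integral
`T₂ = ∫_0^∞ ∫_{r₀}^∞ 2πλ·r·t·exp(−πλr² − 2πλ·t·∫_{r}^∞ x·L(x)/(1+t·L(x)) dx) dr dt`
satisfies `T₂ ≤ (2πλ/((2πλζ−1)(2πλζ−2))) · ∫_{r₀}^∞ (r/L(r)²)·e^{−πλr²} dr`. -/
theorem second_negative_moment_T2_bound
    (r₀ ζ lam : ℝ) (hr₀ : 0 ≤ r₀) (hζ : 0 < ζ) (L L' : ℝ → ℝ)
    (hLmeas : Measurable L)
    (hLpos : ∀ x, 0 ≤ x → 0 < L x)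
    (hLderiv : ∀ x, r₀ ≤ x → HasDerivAt L (L' x) x)
    (hLmono : ∀ x y, r₀ ≤ x → x ≤ y → L y ≤ L x)
    (hLlim : Filter.Tendsto L Filter.atTop (nhds 0))
    (hreg : ∀ x, r₀ ≤ x → ζ * (-(L' x)) ≤ x * L x)
    (hlam : 1 / (Real.pi * ζ) < lam) :
    (∫⁻ t in Set.Ioi (0 : ℝ), ∫⁻ r in Set.Ioi r₀,
        ENNReal.ofReal (2 * Real.pi * lam * r * t) *
          expNeg (ENNReal.ofReal (Real.pi * lam * r ^ 2) +
            ENNReal.ofReal (2 * Real.pi * lam * t) *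
              ∫⁻ x in Set.Ioi r, ENNReal.ofReal (x * L x / (1 + t * L x)))) ≤
      ENNReal.ofReal (2 * Real.pi * lam /
          ((2 * Real.pi * lam * ζ - 1) * (2 * Real.pi * lam * ζ - 2))) *
        ∫⁻ r in Set.Ioi r₀,
          ENNReal.ofReal (r / L r ^ 2 * Real.exp (-(Real.pi * lam * r ^ 2))) :=
  second_negative_moment_T2_bound_general r₀ ζ lam hr₀ hζ L L' hLmeas hLpos hLderiv hLlim hreg hlam
end
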